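/- Hodge decomposition for Hilbert complexes: with d_{q-1}, d_q bounded operators between Hilbert spaces satisfying d_q ∘ d_{q-1} = 0 and Δ_q = d_{q-1}d_{q-1}* + d_q*d_q, there is an orthogonal decomposition C^q = ker Δ_q ⊕ closure(im d_{q-1}) ⊕ closure(im d_q*). -/

import Mathlib

/-!
By `(range T)ᗮ = ker T†`, the orthogonal complements of `A = closure (range d₀)` and
`B = closure (range d₁†)` are `ker d₀†` and `ker d₁`. Since `re ⟪Δ x, x⟫ = ‖d₀† x‖² + ‖d₁ x‖²`,
`ker Δ` is their intersection `Aᗮ ⊓ Bᗮ`. From `d₁ d₀ = 0` we get `A ≤ ker d₁ = Bᗮ`; projecting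
first onto `B` and then, inside `Bᗮ`, onto `A` splits the space as `(Aᗮ ⊓ Bᗮ) ⊔ A ⊔ B`.
-/

open ContinuousLinearMap Submodule
open scoped InnerProductSpace InnerProduct

section

variable {𝕜 E F G : Type*} [RCLike 𝕜]
  [NormedAddCommGroup E] [InnerProductSpace 𝕜 E]
  [NormedAddCommGroup F] [InnerProductSpace 𝕜 F]
  [NormedAddCommGroup G] [InnerProductSpace 𝕜 G]

theorem Submodule.orthogonal_inf_orthogonal_sup_sup_eq_top {A B : Submodule 𝕜 E}
    [A.HasOrthogonalProjection] [B.HasOrthogonalProjection] (hAB : A ≤ Bᗮ) :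
    Aᗮ ⊓ Bᗮ ⊔ A ⊔ B = ⊤ :=
  calc Aᗮ ⊓ Bᗮ ⊔ A ⊔ B = A ⊔ Aᗮ ⊓ Bᗮ ⊔ B := by rw [sup_comm (Aᗮ ⊓ Bᗮ)]
    _ = ⊤ := by
      rw [sup_orthogonal_inf_of_hasOrthogonalProjection hAB, sup_comm,
        sup_orthogonal_of_hasOrthogonalProjection]

theorem ContinuousLinearMap.topologicalClosure_range_le_ker_of_comp_eq_zero
    {T : E →L[𝕜] F} {S : F →L[𝕜] G} (hST : S ∘L T = 0) :
    T.range.topologicalClosure ≤ S.ker :=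
  topologicalClosure_minimal _ (LinearMap.range_le_ker_iff.mpr congr(($hST : E →ₗ[𝕜] G)))
    S.isClosed_ker

variable [CompleteSpace E] [CompleteSpace F] [CompleteSpace G]

theorem ContinuousLinearMap.re_inner_comp_adjoint_add_adjoint_comp_apply_self
    (T : F →L[𝕜] E) (S : E →L[𝕜] G) (x : E) :
    RCLike.re ⟪(T ∘L T† + S† ∘L S) x, x⟫_𝕜 = ‖(T†) x‖ ^ 2 + ‖S x‖ ^ 2 := by
  rw [add_apply, inner_add_left, map_add, comp_apply, comp_apply, adjoint_inner_left,
    ← adjoint_inner_right, norm_sq_eq_re_inner (𝕜 := 𝕜), norm_sq_eq_re_inner (𝕜 := 𝕜)]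

theorem ContinuousLinearMap.ker_comp_adjoint_add_adjoint_comp
    (T : F →L[𝕜] E) (S : E →L[𝕜] G) :
    (T ∘L T† + S† ∘L S).ker = T†.ker ⊓ S.ker := by
  ext x
  simp only [mem_inf, LinearMap.mem_ker, coe_coe]
  refine ⟨fun hx ↦ ?_, fun ⟨hT, hS⟩ ↦ by simp [hT, hS]⟩
  have hsum : ‖(T†) x‖ ^ 2 + ‖S x‖ ^ 2 = 0 := by
    rw [← re_inner_comp_adjoint_add_adjoint_comp_apply_self, hx, inner_zero_left, map_zero]
  obtain ⟨hT, hS⟩ := (add_eq_zero_iff_of_nonneg (by positivity) (by positivity)).mp hsum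
  exact ⟨by simpa using hT, by simpa using hS⟩

theorem ContinuousLinearMap.orthogonal_topologicalClosure_range (T : E →L[𝕜] F) :
    T.range.topologicalClosureᗮ = T†.ker := by
  rw [orthogonal_closure, orthogonal_range]

end

/-- Lemma 6.7 b), Hodge decomposition: with `d₁ ∘ d₀ = 0` and
`Δ = d₀ d₀* + d₁* d₁`, the space `C^q` decomposes orthogonally as
`ker Δ ⊕ closure(im d₀) ⊕ closure(im d₁*)`. -/
theorem hodge_decomposition
    {H0 H1 H2 : Type*}
    [NormedAddCommGroup H0] [InnerProductSpace ℝ H0] [CompleteSpace H0]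
    [NormedAddCommGroup H1] [InnerProductSpace ℝ H1] [CompleteSpace H1]
    [NormedAddCommGroup H2] [InnerProductSpace ℝ H2] [CompleteSpace H2]
    (d0 : H0 →L[ℝ] H1) (d1 : H1 →L[ℝ] H2) (hdd : d1.comp d0 = 0) :
    let Δ := d0.comp (ContinuousLinearMap.adjoint d0)
      + (ContinuousLinearMap.adjoint d1).comp d1
    let K := LinearMap.ker (Δ : H1 →ₗ[ℝ] H1)
    let A := (LinearMap.range (d0 : H0 →ₗ[ℝ] H1)).topologicalClosure
    let B := (LinearMap.range (ContinuousLinearMap.adjoint d1 : H2 →ₗ[ℝ] H1)).topologicalClosure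
    (∀ x ∈ K, ∀ y ∈ A, (inner ℝ x y : ℝ) = 0) ∧
    (∀ x ∈ K, ∀ y ∈ B, (inner ℝ x y : ℝ) = 0) ∧
    (∀ x ∈ A, ∀ y ∈ B, (inner ℝ x y : ℝ) = 0) ∧
    K ⊔ A ⊔ B = ⊤ := by
  intro Δ K A B
  have hA : Aᗮ = (d0†).ker := d0.orthogonal_topologicalClosure_range
  have hB : Bᗮ = d1.ker := by
    simpa only [adjoint_adjoint] using (d1†).orthogonal_topologicalClosure_range
  have hK : K = Aᗮ ⊓ Bᗮ := by
    rw [hA, hB]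
    exact d0.ker_comp_adjoint_add_adjoint_comp d1
  have hAB : A ≤ Bᗮ := hB ▸ topologicalClosure_range_le_ker_of_comp_eq_zero hdd
  have orth {U V : Submodule ℝ H1} (h : U ≤ Vᗮ) : ∀ x ∈ U, ∀ y ∈ V, inner ℝ x y = 0 :=
    isOrtho_iff_inner_eq.mp (isOrtho_iff_le.mpr h)
  exact ⟨orth (hK ▸ inf_le_left), orth (hK ▸ inf_le_right), orth hAB,
    hK ▸ orthogonal_inf_orthogonal_sup_sup_eq_top hAB⟩
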